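/- arXiv:1305.1739 — 2 statements merged into one kernel-verified Lean document; each statement's English description precedes it below -/
import Mathlib

section
/- Let g₁ be a symmetric bilinear form on ℝ⁴ of Lorentzian signature (3,1) (three positive, one negative eigenvalue), and let g₂ be any symmetric bilinear form on ℝ⁴ such that g₂(v,v) = 0 for every v with g₁(v,v) = 0. Then there exists c ∈ ℝ with g₂ = c·g₁. In particular, two Lorentzian forms with the same null cone are proportional. -/
/-!
After a congruence `G₁ ↦ Pᵀ G₁ P` we may assume `G₁ = η = diag(-1, 1, 1, 1)`. A symmetric `H`
vanishing on the null cone of `η` is then pinned down entry by entry by evaluating it on a few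
null vectors: `e₀ ± eᵢ` give `H₀ᵢ = 0` and `Hᵢᵢ = -H₀₀`, and `5 e₀ + 3 eᵢ + 4 eⱼ` gives `Hᵢⱼ = 0`.
Hence `H = -H₀₀ • η`, and undoing the congruence gives `G₂ = -H₀₀ • G₁`.
-/

open Matrix

namespace Matrix

variable {ι R : Type*} [Fintype ι]

theorem dotProduct_transpose_mul_mul_mulVec [CommSemiring R] (P A : Matrix ι ι R) (v : ι → R) :
    v ⬝ᵥ (Pᵀ * A * P) *ᵥ v = (P *ᵥ v) ⬝ᵥ A *ᵥ (P *ᵥ v) := by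
  rw [← mulVec_mulVec, ← mulVec_mulVec, dotProduct_mulVec, vecMul_transpose]

theorem IsSymm.transpose_mul_mul [CommSemiring R] {A : Matrix ι ι R} (hA : A.IsSymm)
    (P : Matrix ι ι R) : (Pᵀ * A * P).IsSymm := by
  simp [IsSymm, transpose_mul, hA.eq, Matrix.mul_assoc]

variable [DecidableEq ι]

theorem eq_of_transpose_mul_mul_eq [CommRing R] {P A B : Matrix ι ι R} (hP : IsUnit P.det)
    (h : Pᵀ * A * P = Pᵀ * B * P) : A = B := by
  have := P.invertibleOfIsUnitDet hP
  exact mul_right_injective_of_invertible Pᵀ (mul_left_injective_of_invertible P h)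

theorem dotProduct_mulVec_single_add_single_add_single [CommSemiring R] (A : Matrix ι ι R)
    (i j k : ι) (a b c : R) :
    (Pi.single i a + Pi.single j b + Pi.single k c) ⬝ᵥ
        A *ᵥ (Pi.single i a + Pi.single j b + Pi.single k c) =
      a * a * A i i + b * b * A j j + c * c * A k k + a * b * (A i j + A j i)
        + a * c * (A i k + A k i) + b * c * (A j k + A k j) := by
  simp only [mulVec_add, dotProduct_add, add_dotProduct, mulVec_single, single_dotProduct,
    Pi.smul_apply, col_apply, MulOpposite.smul_eq_mul_unop, MulOpposite.unop_op]
  ring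

theorem eq_smul_diagonal_of_null_cone [Field R] [CharZero R] {H : Matrix ι ι R}
    (hH : H.IsSymm) {η : ι → R} {t : ι} (ht : η t = -1) (hη : ∀ i ≠ t, η i = 1)
    (hnull : ∀ v, v ⬝ᵥ diagonal η *ᵥ v = 0 → v ⬝ᵥ H *ᵥ v = 0) :
    H = (-H t t) • diagonal η := by
  have h_time : ∀ i ≠ t, H t i = 0 ∧ H i i = -H t t := by
    intro i hi
    have hp := hnull (Pi.single t 1 + Pi.single i 1 + Pi.single i 0) (by
      rw [dotProduct_mulVec_single_add_single_add_single]
      simp [hi, hi.symm, ht, hη i hi])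
    have hm := hnull (Pi.single t 1 + Pi.single i (-1) + Pi.single i 0) (by
      rw [dotProduct_mulVec_single_add_single_add_single]
      simp [hi, hi.symm, ht, hη i hi])
    rw [dotProduct_mulVec_single_add_single_add_single, hH.apply t i] at hp hm
    exact ⟨by linear_combination (hp - hm) / 4, by linear_combination (hp + hm) / 2⟩
  have h_space : ∀ i j, i ≠ t → j ≠ t → i ≠ j → H i j = 0 := by
    intro i j hi hj hij
    have h := hnull (Pi.single t 5 + Pi.single i 3 + Pi.single j 4) (by
      rw [dotProduct_mulVec_single_add_single_add_single]
      simp [hi, hj, hij, hi.symm, hj.symm, hij.symm, ht, hη i hi, hη j hj]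
      norm_num)
    rw [dotProduct_mulVec_single_add_single_add_single, hH.apply t i, hH.apply t j,
      hH.apply i j, (h_time i hi).1, (h_time j hj).1, (h_time i hi).2, (h_time j hj).2] at h
    linear_combination h / 24
  ext i j
  rcases eq_or_ne i j with rfl | hij
  · rcases eq_or_ne i t with rfl | hi
    · simp [ht]
    · simp [hη i hi, (h_time i hi).2]
  · rw [Matrix.smul_apply, diagonal_apply_ne η hij, smul_zero]
    rcases eq_or_ne i t with rfl | hi
    · exact (h_time j hij.symm).1
    rcases eq_or_ne j t with rfl | hj
    · rw [hH.apply, (h_time i hi).1]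
    exact h_space i j hi hj hij

end Matrix

theorem same_null_cone_implies_proportional_general (G₁ G₂ : Matrix (Fin 4) (Fin 4) ℝ)
    (hG₂ : G₂.IsSymm)
    (hsig : ∃ P : Matrix (Fin 4) (Fin 4) ℝ, IsUnit P.det ∧
      P.transpose * G₁ * P = Matrix.diagonal ![(-1 : ℝ), 1, 1, 1])
    (hnull : ∀ v : Fin 4 → ℝ,
      dotProduct v (G₁.mulVec v) = 0 → dotProduct v (G₂.mulVec v) = 0) :
    ∃ c : ℝ, G₂ = c • G₁ := by
  obtain ⟨P, hP, hPG₁⟩ := hsig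
  set H := Pᵀ * G₂ * P
  have hnullH : ∀ v, v ⬝ᵥ diagonal ![(-1 : ℝ), 1, 1, 1] *ᵥ v = 0 → v ⬝ᵥ H *ᵥ v = 0 := by
    intro v hv
    rw [← hPG₁, dotProduct_transpose_mul_mul_mulVec] at hv
    rw [dotProduct_transpose_mul_mul_mulVec]
    exact hnull _ hv
  refine ⟨-H 0 0, eq_of_transpose_mul_mul_eq hP ?_⟩
  calc H = (-H 0 0) • diagonal ![(-1 : ℝ), 1, 1, 1] :=
        eq_smul_diagonal_of_null_cone (hG₂.transpose_mul_mul P) rfl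
          (by intro i hi; fin_cases i <;> simp_all) hnullH
    _ = Pᵀ * (-H 0 0 • G₁) * P := by rw [← hPG₁, Matrix.mul_smul, Matrix.smul_mul]

/-- Two symmetric bilinear forms on ℝ⁴ (represented by symmetric matrices), where the
first has Lorentzian signature (3,1), having the property that the second vanishes on
the null cone of the first, are proportional. In particular two Lorentzian forms with
the same light cone are proportional. -/
theorem same_null_cone_implies_proportional (G₁ G₂ : Matrix (Fin 4) (Fin 4) ℝ)
    (hG₁ : G₁.IsSymm) (hG₂ : G₂.IsSymm)
    (hsig : ∃ P : Matrix (Fin 4) (Fin 4) ℝ, IsUnit P.det ∧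
      P.transpose * G₁ * P = Matrix.diagonal ![(-1 : ℝ), 1, 1, 1])
    (hnull : ∀ v : Fin 4 → ℝ,
      dotProduct v (G₁.mulVec v) = 0 → dotProduct v (G₂.mulVec v) = 0) :
    ∃ c : ℝ, G₂ = c • G₁ :=
  same_null_cone_implies_proportional_general G₁ G₂ hG₂ hsig hnull
end

section
/- Let m = diag(-1,1,1,1) be the Minkowski metric on ℝ⁴ and let ξ ∈ ℝ⁴ be a nonzero lightlike covector (m^{ab}ξ_aξ_b = 0). Define the linear map Φ from the 10-dimensional space of symmetric 4×4 real matrices to ℝ⁴ by Φ(v)_j = m^{mn} ξ_m v_{nj} - (1/2) ξ_j (m^{pq} v_{pq}). Then Φ is surjective, and its kernel (the space of symmetric tensors satisfying the divergence condition for principal symbols at ξ) has dimension 6. -/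
/-!
Write `⟨x, y⟩ = x G y` for the metric `G` with inverse `H`. On the symmetrised product
`ζ ⊙ u = ζ uᵀ + u ζᵀ` the symbol is `Φ(ζ ⊙ u) = ⟨ξ, ζ⟩ u + ⟨ξ, u⟩ ζ - ⟨ζ, u⟩ ξ`, and on the metric
itself `Φ(H) = (1 - n / 2) ξ`. Since `G` is nondegenerate and `ξ ≠ 0` there is a `ζ` with
`⟨ξ, ζ⟩ = 1`; taking `u = y - (⟨ξ, y⟩ / 2) ζ` gives `Φ(ζ ⊙ u) = y - ⟨ζ, u⟩ ξ`, and a multiple of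
`H` removes the last term as long as `n ≠ 2`. So `Φ` maps the symmetric matrices onto `Kⁿ`, and by
rank–nullity its kernel there has dimension `n (n + 1) / 2 - n`, which is `6` for `n = 4`; the
dimension `n (n + 1) / 2` comes from identifying symmetric matrices with functions on `Sym2`.
-/

/-- The inverse Minkowski metric diag(-1,1,1,1). -/
def eta : Fin 4 → Fin 4 → ℝ := fun m n => if m = n then (if m = 0 then -1 else 1) else 0

/-- The divergence-condition map on symmetric tensors at a covector ξ:
`Φ(v)_j = m^{mn} ξ_m v_{nj} - (1/2) ξ_j m^{pq} v_{pq}`. -/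
noncomputable def Phi (ξ : Fin 4 → ℝ) (v : Matrix (Fin 4) (Fin 4) ℝ) : Fin 4 → ℝ :=
  fun j => (∑ m, ∑ n, eta m n * ξ m * v n j) - (1 / 2) * ξ j * (∑ p, ∑ q, eta p q * v p q)

open Matrix Module

namespace Matrix

section Symmetric

variable (R n : Type*) [CommSemiring R]

def symmetricSubmodule : Submodule R (Matrix n n R) where
  carrier := {A | A.IsSymm}
  add_mem' := IsSymm.add
  zero_mem' := isSymm_zero
  smul_mem' c _ h := h.smul c

def symmetricSubmoduleEquivFunSym2 : symmetricSubmodule R n ≃ₗ[R] (Sym2 n → R) where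
  toFun A := Sym2.lift ⟨A.1, fun i j => (A.2.apply i j).symm⟩
  map_add' _ _ := by ext ⟨i, j⟩; rfl
  map_smul' _ _ := by ext ⟨i, j⟩; rfl
  invFun f := ⟨of fun i j => f s(i, j), IsSymm.ext fun i j => by simp [Sym2.eq_swap]⟩
  left_inv _ := rfl
  right_inv f := by ext ⟨i, j⟩; rfl

theorem finrank_symmetricSubmodule (R n : Type*) [CommRing R] [StrongRankCondition R]
    [Fintype n] : finrank R (symmetricSubmodule R n) = (Fintype.card n + 1).choose 2 := by
  rw [(symmetricSubmoduleEquivFunSym2 R n).finrank_eq, finrank_fintype_fun_eq_card, Sym2.card]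

end Symmetric

theorem sum_sum_mul_vecMulVec {R n : Type*} [CommSemiring R] [Fintype n] (G : Matrix n n R)
    (a b : n → R) : ∑ p, ∑ q, G p q * vecMulVec a b p q = a ⬝ᵥ G *ᵥ b := by
  simp only [vecMulVec_apply, dotProduct, mulVec, Finset.mul_sum]
  exact Finset.sum_congr rfl fun p _ => Finset.sum_congr rfl fun q _ => by ring

end Matrix

section FiniteDimensional

variable {K M : Type*} [DivisionRing K] [AddCommGroup M] [Module K M]

theorem Submodule.finrank_inf_ker_add_finrank {N : Type*} [AddCommGroup N] [Module K N]
    (S : Submodule K M) [FiniteDimensional K S] (f : M →ₗ[K] N) (hf : S.map f = ⊤) :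
    finrank K ↥(S ⊓ LinearMap.ker f) + finrank K N = finrank K S := by
  rw [← map_comap_subtype, finrank_map_subtype_eq, ← LinearMap.ker_domRestrict, ← finrank_top K N,
    ← hf, ← LinearMap.range_domRestrict, add_comm, LinearMap.finrank_range_add_finrank_ker]

theorem Submodule.exists_linearIndependent_of_finrank_eq (S : Submodule K M)
    [FiniteDimensional K S] {k : ℕ} (hk : finrank K S = k) :
    ∃ b : Fin k → M, LinearIndependent K b ∧ (∀ i, b i ∈ S) ∧
      ∀ v ∈ S, ∃ c : Fin k → K, v = ∑ i, c i • b i := by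
  let B := finBasisOfFinrankEq K S hk
  refine ⟨fun i => B i, B.linearIndependent.map' S.subtype S.ker_subtype, fun i => (B i).2,
    fun v hv => ⟨B.repr ⟨v, hv⟩, ?_⟩⟩
  simpa only [Submodule.coe_sum, Submodule.coe_smul]
    using congrArg Subtype.val (B.sum_repr ⟨v, hv⟩).symm

end FiniteDimensional

theorem exists_dotProduct_eq_one {K ι : Type*} [DivisionRing K] [Fintype ι] [DecidableEq ι]
    {w : ι → K} (hw : w ≠ 0) : ∃ ζ, w ⬝ᵥ ζ = 1 := by
  obtain ⟨i, hi⟩ := Function.ne_iff.mp hw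
  exact ⟨Pi.single i (w i)⁻¹, by simpa using mul_inv_cancel₀ hi⟩

section DivergenceSymbol

variable {K ι : Type*} [Field K] [Fintype ι]

def divergenceSymbol (G : Matrix ι ι K) (ξ : ι → K) : Matrix ι ι K →ₗ[K] ι → K where
  toFun v := (ξ ᵥ* G) ᵥ* v - ((∑ p, ∑ q, G p q * v p q) / 2) • ξ
  map_add' v w := by
    simp only [vecMul_add, Matrix.add_apply, mul_add, Finset.sum_add_distrib]
    module
  map_smul' c v := by
    simp only [vecMul_smul, Matrix.smul_apply, smul_eq_mul, RingHom.id_apply, mul_left_comm _ c,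
      ← Finset.mul_sum, mul_div_assoc]
    module

variable {G : Matrix ι ι K} {ξ : ι → K}

theorem divergenceSymbol_apply (v : Matrix ι ι K) :
    divergenceSymbol G ξ v = (ξ ᵥ* G) ᵥ* v - ((∑ p, ∑ q, G p q * v p q) / 2) • ξ := rfl

theorem divergenceSymbol_vecMulVec_add [NeZero (2 : K)] (hG : G.IsSymm) (a b : ι → K) :
    divergenceSymbol G ξ (vecMulVec a b + vecMulVec b a) =
      ((ξ ᵥ* G) ⬝ᵥ a) • b + ((ξ ᵥ* G) ⬝ᵥ b) • a - (a ⬝ᵥ G *ᵥ b) • ξ := by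
  have hba : b ⬝ᵥ G *ᵥ a = a ⬝ᵥ G *ᵥ b := by
    rw [dotProduct_mulVec, dotProduct_comm, ← vecMul_transpose, hG.eq]
  have hpair : ∑ p, ∑ q, G p q * (vecMulVec a b + vecMulVec b a) p q = 2 * (a ⬝ᵥ G *ᵥ b) := by
    simp only [Matrix.add_apply, mul_add, Finset.sum_add_distrib, sum_sum_mul_vecMulVec, hba,
      two_mul]
  rw [divergenceSymbol_apply, hpair, vecMul_add, vecMul_vecMulVec, vecMul_vecMulVec,
    mul_div_cancel_left₀ _ two_ne_zero]

theorem divergenceSymbol_apply_of_mul_eq_one [DecidableEq ι] {H : Matrix ι ι K} (hGH : G * H = 1)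
    (hH : H.IsSymm) : divergenceSymbol G ξ H = (1 - (Fintype.card ι : K) / 2) • ξ := by
  have hpair : ∑ p, ∑ q, G p q * H p q = Fintype.card ι := by
    rw [← trace_one, ← hGH]
    simp only [trace, diag, mul_apply, hH.apply]
  rw [divergenceSymbol_apply, vecMul_vecMul, hGH, vecMul_one, hpair]
  module

theorem exists_isSymm_divergenceSymbol_eq [DecidableEq ι] [NeZero (2 : K)] {H : Matrix ι ι K}
    (hG : G.IsSymm) (hGH : G * H = 1) (hH : H.IsSymm) (hn : (Fintype.card ι : K) ≠ 2)
    (hξ : ξ ≠ 0) (y : ι → K) : ∃ v : Matrix ι ι K, v.IsSymm ∧ divergenceSymbol G ξ v = y := by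
  have hξG : ξ ᵥ* G ≠ 0 := fun h =>
    hξ (by rw [← vecMul_one ξ, ← hGH, ← vecMul_vecMul, h, zero_vecMul])
  obtain ⟨ζ, hζ⟩ := exists_dotProduct_eq_one hξG
  have htrace : 1 - (Fintype.card ι : K) / 2 ≠ 0 := by
    rwa [sub_ne_zero, ne_comm, Ne, div_eq_one_iff_eq two_ne_zero]
  set u := y - ((ξ ᵥ* G ⬝ᵥ y) / 2) • ζ
  set c := (ζ ⬝ᵥ G *ᵥ u) / (1 - (Fintype.card ι : K) / 2)
  refine ⟨vecMulVec ζ u + vecMulVec u ζ + c • H, ?_, ?_⟩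
  · refine IsSymm.add (IsSymm.ext fun i j => ?_) (hH.smul c)
    simp only [Matrix.add_apply, vecMulVec_apply]
    ring
  · have hu : ξ ᵥ* G ⬝ᵥ u = (ξ ᵥ* G ⬝ᵥ y) / 2 := by
      rw [dotProduct_sub, dotProduct_smul, hζ, smul_eq_mul, mul_one, sub_half]
    have hc : c * (1 - (Fintype.card ι : K) / 2) = ζ ⬝ᵥ G *ᵥ u := div_mul_cancel₀ _ htrace
    rw [map_add, map_smul, divergenceSymbol_vecMulVec_add hG,
      divergenceSymbol_apply_of_mul_eq_one hGH hH, hζ, hu, smul_smul, hc]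
    simp only [u]
    module

end DivergenceSymbol

theorem eta_isSymm : (of eta).IsSymm :=
  IsSymm.ext fun i j => by fin_cases i <;> fin_cases j <;> rfl

theorem eta_mul_eta : of eta * of eta = 1 := by
  ext i j
  fin_cases i <;> fin_cases j <;> simp [eta, mul_apply]

theorem Phi_eq_divergenceSymbol (ξ : Fin 4 → ℝ) : Phi ξ = divergenceSymbol (of eta) ξ := by
  ext v j
  simp only [Phi, divergenceSymbol_apply, Pi.sub_apply, Pi.smul_apply, vecMul, dotProduct,
    Finset.sum_mul, of_apply, smul_eq_mul]
  rw [Finset.sum_comm]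
  simp only [mul_comm (ξ _) (eta _ _)]
  ring

theorem divergence_condition_surjective_and_kernel_dim_six_general
    (ξ : Fin 4 → ℝ) (hξ : ξ ≠ 0) :
    (∀ y : Fin 4 → ℝ, ∃ v : Matrix (Fin 4) (Fin 4) ℝ, v.IsSymm ∧ Phi ξ v = y) ∧
    (∃ b : Fin 6 → Matrix (Fin 4) (Fin 4) ℝ, LinearIndependent ℝ b ∧
      (∀ i, (b i).IsSymm ∧ Phi ξ (b i) = 0) ∧
      (∀ v : Matrix (Fin 4) (Fin 4) ℝ, v.IsSymm → Phi ξ v = 0 →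
        ∃ c : Fin 6 → ℝ, v = ∑ i, c i • b i)) := by
  rw [Phi_eq_divergenceSymbol]
  set Φ := divergenceSymbol (of eta) ξ
  set S := symmetricSubmodule ℝ (Fin 4)
  have hsurj := exists_isSymm_divergenceSymbol_eq eta_isSymm eta_mul_eta eta_isSymm (by norm_num) hξ
  have hdim := S.finrank_inf_ker_add_finrank Φ (Submodule.eq_top_iff'.mpr hsurj)
  rw [finrank_symmetricSubmodule, finrank_fin_fun, Fintype.card_fin, Nat.choose_two_right] at hdim
  obtain ⟨b, hb, hbK, hspan⟩ :=
    (S ⊓ LinearMap.ker Φ).exists_linearIndependent_of_finrank_eq (k := 6) (by omega)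
  exact ⟨hsurj, b, hb, hbK, fun v hv h0 => hspan v ⟨hv, h0⟩⟩

/-- For a nonzero lightlike covector ξ, the map Φ is surjective from symmetric 4×4
matrices onto ℝ⁴, and its kernel (the symmetric tensors satisfying the divergence
condition for principal symbols at ξ) has dimension 6. -/
theorem divergence_condition_surjective_and_kernel_dim_six
    (ξ : Fin 4 → ℝ) (hξ : ξ ≠ 0)
    (hlight : ∑ m, ∑ n, eta m n * ξ m * ξ n = 0) :
    (∀ y : Fin 4 → ℝ, ∃ v : Matrix (Fin 4) (Fin 4) ℝ, v.IsSymm ∧ Phi ξ v = y) ∧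
    (∃ b : Fin 6 → Matrix (Fin 4) (Fin 4) ℝ, LinearIndependent ℝ b ∧
      (∀ i, (b i).IsSymm ∧ Phi ξ (b i) = 0) ∧
      (∀ v : Matrix (Fin 4) (Fin 4) ℝ, v.IsSymm → Phi ξ v = 0 →
        ∃ c : Fin 6 → ℝ, v = ∑ i, c i • b i)) :=
  divergence_condition_surjective_and_kernel_dim_six_general ξ hξ
end
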